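/- arXiv:math/0506576 — 2 statements merged into one kernel-verified Lean document; each statement's English description precedes it below -/
import Mathlib

section
/- Let U ⊆ (ℂ∖{0})² be open with coordinates (q₁,q₂), and let F, x, y be holomorphic nonvanishing functions on U with Δ = G_{x,1}G_{y,2} − G_{x,2}G_{y,1} nonvanishing and G_{x,1}²G_{y,2}² − G_{y,1}²G_{x,2}² nonvanishing on U. Then on U the identity D_x²F + a₀·D_xD_yF + a₁·D_xF + a₂·D_yF + a₃·F = 0 holds, where a₀ = 2G_{y,1}G_{y,2}/(G_{x,1}G_{y,2} + G_{y,1}G_{x,2}), a₁ = (G_{y,2}²(D_{q₁}G_{x,1} − 2G_{F,1}G_{x,1}) − G_{y,1}²(D_{q₂}G_{x,2} − 2G_{F,2}G_{x,2}))/(G_{x,1}²G_{y,2}² − G_{y,1}²G_{x,2}²), a₂ = (G_{y,2}²(D_{q₁}G_{y,1} − 2G_{F,1}G_{y,1}) − G_{y,1}²(D_{q₂}G_{y,2} − 2G_{F,2}G_{y,2}))/(G_{x,1}²G_{y,2}² − G_{y,1}²G_{x,2}²), and a₃ = −(G_{y,2}²(D_{q₁}G_{F,1} − G_{F,1}²)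 − G_{y,1}²(D_{q₂}G_{F,2} − G_{F,2}²))/(G_{x,1}²G_{y,2}² − G_{y,1}²G_{x,2}²). -/
/-!
`D_{q₁}` and `D_{q₂}` are derivations at every point, and on holomorphic functions they commute
(symmetry of the second derivative), so `D_{q₁}G_{t,2} = D_{q₂}G_{t,1}`: both are
`D_{q₁}D_{q₂} log t`. Expanding `D_{q_i}(Δ_x/Δ)` by the quotient and product rules writes every
term of the equation through the six values `G_{t,j}` and the nine derivatives `D_{q_i}G_{t,j}`,
`i ≤ j`. The equation is then a rational identity in these fifteen quantities and `F`, with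
denominators powers of `Δ` and of `G_{x,1}G_{y,2} + G_{y,1}G_{x,2}`, the two factors of
`G_{x,1}²G_{y,2}² − G_{y,1}²G_{x,2}²`.
-/

open Complex

/-- `D_{q₁}t = q₁ ∂t/∂q₁` for a function `t` of `(q₁, q₂)`. -/
noncomputable def Dq1 (f : ℂ × ℂ → ℂ) : ℂ × ℂ → ℂ :=
  fun p => p.1 * deriv (fun z => f (z, p.2)) p.1

/-- `D_{q₂}t = q₂ ∂t/∂q₂` for a function `t` of `(q₁, q₂)`. -/
noncomputable def Dq2 (f : ℂ × ℂ → ℂ) : ℂ × ℂ → ℂ :=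
  fun p => p.2 * deriv (fun z => f (p.1, z)) p.2

/-- `G_{t,1} = D_{q₁}t / t`. -/
noncomputable def G1 (f : ℂ × ℂ → ℂ) : ℂ × ℂ → ℂ := fun p => Dq1 f p / f p

/-- `G_{t,2} = D_{q₂}t / t`. -/
noncomputable def G2 (f : ℂ × ℂ → ℂ) : ℂ × ℂ → ℂ := fun p => Dq2 f p / f p

/-- `Δ = G_{x,1}G_{y,2} − G_{x,2}G_{y,1}`. -/
noncomputable def Del (x y : ℂ × ℂ → ℂ) : ℂ × ℂ → ℂ :=
  fun p => G1 x p * G2 y p - G2 x p * G1 y p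

/-- `Δ_x = G_{F,1}G_{y,2} − G_{F,2}G_{y,1}`. -/
noncomputable def DelX (F y : ℂ × ℂ → ℂ) : ℂ × ℂ → ℂ :=
  fun p => G1 F p * G2 y p - G2 F p * G1 y p

/-- `Δ_y = −G_{x,2}G_{F,1} + G_{x,1}G_{F,2}`. -/
noncomputable def DelY (F x : ℂ × ℂ → ℂ) : ℂ × ℂ → ℂ :=
  fun p => -(G2 x p * G1 F p) + G1 x p * G2 F p

/-- `Δ_x/Δ`. -/
noncomputable def RX (F x y : ℂ × ℂ → ℂ) : ℂ × ℂ → ℂ :=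
  fun p => DelX F y p / Del x y p

/-- `Δ_y/Δ`. -/
noncomputable def RY (F x y : ℂ × ℂ → ℂ) : ℂ × ℂ → ℂ :=
  fun p => DelY F x p / Del x y p

/-- `D_xF = F·Δ_x/Δ`. -/
noncomputable def DX (F x y : ℂ × ℂ → ℂ) : ℂ × ℂ → ℂ :=
  fun p => F p * DelX F y p / Del x y p

/-- `D_yF = F·Δ_y/Δ`. -/
noncomputable def DY (F x y : ℂ × ℂ → ℂ) : ℂ × ℂ → ℂ :=
  fun p => F p * DelY F x p / Del x y p

/-- `D_x²F = F·Δ_x²/Δ² + (F/Δ)(G_{y,2}·D_{q₁}(Δ_x/Δ) − G_{y,1}·D_{q₂}(Δ_x/Δ))`. -/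
noncomputable def DXX (F x y : ℂ × ℂ → ℂ) : ℂ × ℂ → ℂ :=
  fun p => F p * (DelX F y p) ^ 2 / (Del x y p) ^ 2 +
    F p / Del x y p *
      (G2 y p * Dq1 (RX F x y) p - G1 y p * Dq2 (RX F x y) p)

/-- `D_xD_yF = F·Δ_xΔ_y/Δ² + (F/Δ)(−G_{x,2}·D_{q₁}(Δ_x/Δ) + G_{x,1}·D_{q₂}(Δ_x/Δ))`. -/
noncomputable def DXY (F x y : ℂ × ℂ → ℂ) : ℂ × ℂ → ℂ :=
  fun p => F p * DelX F y p * DelY F x p / (Del x y p) ^ 2 +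
    F p / Del x y p *
      (-(G2 x p) * Dq1 (RX F x y) p + G1 x p * Dq2 (RX F x y) p)

open Filter Topology

section SecondDerivative

variable {𝕜 E F : Type*} [NontriviallyNormedField 𝕜] [NormedAddCommGroup E] [NormedSpace 𝕜 E]
  [NormedAddCommGroup F] [NormedSpace 𝕜 F] {f : E → F} {x : E}

lemma AnalyticAt.fderiv_apply [CompleteSpace F] (h : AnalyticAt 𝕜 f x) (v : E) :
    AnalyticAt 𝕜 (fun y => fderiv 𝕜 f y v) x :=
  ((ContinuousLinearMap.apply 𝕜 F v).analyticAt _).comp h.fderiv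

lemma fderiv_fderiv_apply (h : DifferentiableAt 𝕜 (fderiv 𝕜 f) x) (v w : E) :
    fderiv 𝕜 (fun y => fderiv 𝕜 f y v) x w = fderiv 𝕜 (fderiv 𝕜 f) x w v := by
  rw [fderiv_clm_apply h (differentiableAt_const v)]
  simp

end SecondDerivative

section EulerOperators

variable {f g : ℂ × ℂ → ℂ} {p : ℂ × ℂ}

lemma DifferentiableAt.slice_fst (h : DifferentiableAt ℂ f p) :
    DifferentiableAt ℂ (fun z => f (z, p.2)) p.1 :=
  h.comp (𝕜 := ℂ) p.1 (differentiableAt_id.prodMk (differentiableAt_const _))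

lemma DifferentiableAt.slice_snd (h : DifferentiableAt ℂ f p) :
    DifferentiableAt ℂ (fun w => f (p.1, w)) p.2 :=
  h.comp (𝕜 := ℂ) p.2 ((differentiableAt_const _).prodMk differentiableAt_id)

lemma dq1_sub (hf : DifferentiableAt ℂ f p) (hg : DifferentiableAt ℂ g p) :
    Dq1 (f - g) p = Dq1 f p - Dq1 g p := by
  simp only [Dq1, Pi.sub_apply, deriv_fun_sub hf.slice_fst hg.slice_fst]
  ring

lemma dq2_sub (hf : DifferentiableAt ℂ f p) (hg : DifferentiableAt ℂ g p) :
    Dq2 (f - g) p = Dq2 f p - Dq2 g p := by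
  simp only [Dq2, Pi.sub_apply, deriv_fun_sub hf.slice_snd hg.slice_snd]
  ring

lemma dq1_mul (hf : DifferentiableAt ℂ f p) (hg : DifferentiableAt ℂ g p) :
    Dq1 (f * g) p = Dq1 f p * g p + f p * Dq1 g p := by
  simp only [Dq1, Pi.mul_apply, deriv_fun_mul hf.slice_fst hg.slice_fst]
  ring

lemma dq2_mul (hf : DifferentiableAt ℂ f p) (hg : DifferentiableAt ℂ g p) :
    Dq2 (f * g) p = Dq2 f p * g p + f p * Dq2 g p := by
  simp only [Dq2, Pi.mul_apply, deriv_fun_mul hf.slice_snd hg.slice_snd]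
  ring

lemma dq1_div (hf : DifferentiableAt ℂ f p) (hg : DifferentiableAt ℂ g p) (hg0 : g p ≠ 0) :
    Dq1 (f / g) p = (Dq1 f p * g p - f p * Dq1 g p) / g p ^ 2 := by
  simp only [Dq1, Pi.div_apply, deriv_fun_div hf.slice_fst hg.slice_fst hg0]
  ring

lemma dq2_div (hf : DifferentiableAt ℂ f p) (hg : DifferentiableAt ℂ g p) (hg0 : g p ≠ 0) :
    Dq2 (f / g) p = (Dq2 f p * g p - f p * Dq2 g p) / g p ^ 2 := by
  simp only [Dq2, Pi.div_apply, deriv_fun_div hf.slice_snd hg.slice_snd hg0]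
  ring

lemma dq1_mul_sub_mul {a b c d : ℂ × ℂ → ℂ} (ha : DifferentiableAt ℂ a p)
    (hb : DifferentiableAt ℂ b p) (hc : DifferentiableAt ℂ c p) (hd : DifferentiableAt ℂ d p) :
    Dq1 (a * b - c * d) p = Dq1 a p * b p + a p * Dq1 b p - (Dq1 c p * d p + c p * Dq1 d p) := by
  rw [dq1_sub (ha.mul hb) (hc.mul hd), dq1_mul ha hb, dq1_mul hc hd]

lemma dq2_mul_sub_mul {a b c d : ℂ × ℂ → ℂ} (ha : DifferentiableAt ℂ a p)
    (hb : DifferentiableAt ℂ b p) (hc : DifferentiableAt ℂ c p) (hd : DifferentiableAt ℂ d p) :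
    Dq2 (a * b - c * d) p = Dq2 a p * b p + a p * Dq2 b p - (Dq2 c p * d p + c p * Dq2 d p) := by
  rw [dq2_sub (ha.mul hb) (hc.mul hd), dq2_mul ha hb, dq2_mul hc hd]

lemma dq1_eq_fderiv (h : DifferentiableAt ℂ f p) : Dq1 f p = p.1 * fderiv ℂ f p (1, 0) := by
  have hslice : HasDerivAt (fun z => ((z, p.2) : ℂ × ℂ)) (1, 0) p.1 :=
    (hasDerivAt_id _).prodMk (hasDerivAt_const _ _)
  exact congrArg (p.1 * ·) (h.hasFDerivAt.comp_hasDerivAt_of_eq p.1 hslice rfl).deriv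

lemma dq2_eq_fderiv (h : DifferentiableAt ℂ f p) : Dq2 f p = p.2 * fderiv ℂ f p (0, 1) := by
  have hslice : HasDerivAt (fun w => ((p.1, w) : ℂ × ℂ)) (0, 1) p.2 :=
    (hasDerivAt_const _ _).prodMk (hasDerivAt_id _)
  exact congrArg (p.2 * ·) (h.hasFDerivAt.comp_hasDerivAt_of_eq p.2 hslice rfl).deriv

lemma dq1_eventuallyEq (h : AnalyticAt ℂ f p) :
    Dq1 f =ᶠ[𝓝 p] fun q => q.1 * fderiv ℂ f q (1, 0) := by
  filter_upwards [h.eventually_analyticAt] with q hq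
  exact dq1_eq_fderiv hq.differentiableAt

lemma dq2_eventuallyEq (h : AnalyticAt ℂ f p) :
    Dq2 f =ᶠ[𝓝 p] fun q => q.2 * fderiv ℂ f q (0, 1) := by
  filter_upwards [h.eventually_analyticAt] with q hq
  exact dq2_eq_fderiv hq.differentiableAt

lemma AnalyticAt.dq1 (h : AnalyticAt ℂ f p) : AnalyticAt ℂ (Dq1 f) p :=
  (analyticAt_fst.mul (h.fderiv_apply _)).congr (dq1_eventuallyEq h).symm

lemma AnalyticAt.dq2 (h : AnalyticAt ℂ f p) : AnalyticAt ℂ (Dq2 f) p :=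
  (analyticAt_snd.mul (h.fderiv_apply _)).congr (dq2_eventuallyEq h).symm

lemma AnalyticAt.g1 (h : AnalyticAt ℂ f p) (h0 : f p ≠ 0) : AnalyticAt ℂ (G1 f) p :=
  h.dq1.div h h0

lemma AnalyticAt.g2 (h : AnalyticAt ℂ f p) (h0 : f p ≠ 0) : AnalyticAt ℂ (G2 f) p :=
  h.dq2.div h h0

lemma dq1_dq2_eq (h : AnalyticAt ℂ f p) :
    Dq1 (Dq2 f) p = p.1 * p.2 * fderiv ℂ (fderiv ℂ f) p (1, 0) (0, 1) := by
  rw [dq1_eq_fderiv h.dq2.differentiableAt, (dq2_eventuallyEq h).fderiv_eq,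
    fderiv_fun_mul differentiableAt_snd (h.fderiv_apply _).differentiableAt]
  simp only [fderiv_snd, ContinuousLinearMap.coe_snd', add_apply, smul_apply, smul_eq_mul,
    fderiv_fderiv_apply h.fderiv.differentiableAt, mul_zero, add_zero]
  ring

lemma dq2_dq1_eq (h : AnalyticAt ℂ f p) :
    Dq2 (Dq1 f) p = p.1 * p.2 * fderiv ℂ (fderiv ℂ f) p (0, 1) (1, 0) := by
  rw [dq2_eq_fderiv h.dq1.differentiableAt, (dq1_eventuallyEq h).fderiv_eq,
    fderiv_fun_mul differentiableAt_fst (h.fderiv_apply _).differentiableAt]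
  simp only [fderiv_fst, ContinuousLinearMap.coe_fst', add_apply, smul_apply, smul_eq_mul,
    fderiv_fderiv_apply h.fderiv.differentiableAt, mul_zero, add_zero]
  ring

lemma dq1_dq2_comm (h : AnalyticAt ℂ f p) : Dq1 (Dq2 f) p = Dq2 (Dq1 f) p := by
  rw [dq1_dq2_eq h, dq2_dq1_eq h, h.contDiffAt.isSymmSndFDerivAt_of_omega]

lemma dq1_g2_eq_dq2_g1 (h : AnalyticAt ℂ f p) (h0 : f p ≠ 0) : Dq1 (G2 f) p = Dq2 (G1 f) p := by
  have hd := h.differentiableAt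
  rw [show G2 f = Dq2 f / f from rfl, show G1 f = Dq1 f / f from rfl,
    dq1_div h.dq2.differentiableAt hd h0, dq2_div h.dq1.differentiableAt hd h0, dq1_dq2_comm h]
  ring

end EulerOperators

lemma rx_eq (F x y : ℂ × ℂ → ℂ) : RX F x y = DelX F y / Del x y := rfl

lemma delX_eq (F y : ℂ × ℂ → ℂ) : DelX F y = G1 F * G2 y - G2 F * G1 y := rfl

lemma del_eq (x y : ℂ × ℂ → ℂ) : Del x y = G1 x * G2 y - G2 x * G1 y := rfl

/-- Here `xᵢ = G_{x,i}(p)`, `xᵢⱼ = D_{q_i}G_{x,j}(p)`, likewise for `y` and `F`, and `f = F(p)`;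
`D_{q_i}(Δ_x/Δ)` is expanded by the quotient rule, and the equal mixed derivatives
`D_{q₁}G_{t,2} = D_{q₂}G_{t,1}` are both `t12`. -/
lemma pde_combination_eq_zero (x1 x2 y1 y2 F1 F2 f x11 x12 x22 y11 y12 y22 F11 F12 F22 : ℂ)
    (hden : x1 ^ 2 * y2 ^ 2 - y1 ^ 2 * x2 ^ 2 ≠ 0) :
    f * (F1 * y2 - F2 * y1) ^ 2 / (x1 * y2 - x2 * y1) ^ 2
    + f / (x1 * y2 - x2 * y1) *
        (y2 * (((F11 * y2 + F1 * y12 - (F12 * y1 + F2 * y11)) * (x1 * y2 - x2 * y1)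
              - (F1 * y2 - F2 * y1) * (x11 * y2 + x1 * y12 - (x12 * y1 + x2 * y11)))
            / (x1 * y2 - x2 * y1) ^ 2)
        - y1 * (((F12 * y2 + F1 * y22 - (F22 * y1 + F2 * y12)) * (x1 * y2 - x2 * y1)
              - (F1 * y2 - F2 * y1) * (x12 * y2 + x1 * y22 - (x22 * y1 + x2 * y12)))
            / (x1 * y2 - x2 * y1) ^ 2))
    + 2 * y1 * y2 / (x1 * y2 + y1 * x2) *
        (f * (F1 * y2 - F2 * y1) * (-(x2 * F1) + x1 * F2) / (x1 * y2 - x2 * y1) ^ 2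
        + f / (x1 * y2 - x2 * y1) *
          (-x2 * (((F11 * y2 + F1 * y12 - (F12 * y1 + F2 * y11)) * (x1 * y2 - x2 * y1)
                - (F1 * y2 - F2 * y1) * (x11 * y2 + x1 * y12 - (x12 * y1 + x2 * y11)))
              / (x1 * y2 - x2 * y1) ^ 2)
          + x1 * (((F12 * y2 + F1 * y22 - (F22 * y1 + F2 * y12)) * (x1 * y2 - x2 * y1)
                - (F1 * y2 - F2 * y1) * (x12 * y2 + x1 * y22 - (x22 * y1 + x2 * y12)))
              / (x1 * y2 - x2 * y1) ^ 2)))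
    + (y2 ^ 2 * (x11 - 2 * F1 * x1) - y1 ^ 2 * (x22 - 2 * F2 * x2))
        / (x1 ^ 2 * y2 ^ 2 - y1 ^ 2 * x2 ^ 2) * (f * (F1 * y2 - F2 * y1) / (x1 * y2 - x2 * y1))
    + (y2 ^ 2 * (y11 - 2 * F1 * y1) - y1 ^ 2 * (y22 - 2 * F2 * y2))
        / (x1 ^ 2 * y2 ^ 2 - y1 ^ 2 * x2 ^ 2) * (f * (-(x2 * F1) + x1 * F2) / (x1 * y2 - x2 * y1))
    + -((y2 ^ 2 * (F11 - F1 ^ 2) - y1 ^ 2 * (F22 - F2 ^ 2)) / (x1 ^ 2 * y2 ^ 2 - y1 ^ 2 * x2 ^ 2))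
        * f
    = 0 := by
  have hfac : x1 ^ 2 * y2 ^ 2 - y1 ^ 2 * x2 ^ 2 = (x1 * y2 - x2 * y1) * (x1 * y2 + y1 * x2) := by
    ring
  rw [hfac] at hden ⊢
  obtain ⟨hd, hs⟩ := mul_ne_zero_iff.mp hden
  -- `field_simp` only cancels the two factors once they are atoms
  generalize hd_def : x1 * y2 - x2 * y1 = d at *
  generalize hs_def : x1 * y2 + y1 * x2 = s at *
  field_simp
  subst hd_def hs_def
  ring

theorem stmt0_general
    (U : Set (ℂ × ℂ))
    (F x y : ℂ × ℂ → ℂ)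
    (hF : AnalyticOnNhd ℂ F U) (hx : AnalyticOnNhd ℂ x U) (hy : AnalyticOnNhd ℂ y U)
    (hFne : ∀ p ∈ U, F p ≠ 0) (hxne : ∀ p ∈ U, x p ≠ 0) (hyne : ∀ p ∈ U, y p ≠ 0)
    (hden : ∀ p ∈ U, (G1 x p) ^ 2 * (G2 y p) ^ 2 - (G1 y p) ^ 2 * (G2 x p) ^ 2 ≠ 0) :
    ∀ p ∈ U,
      DXX F x y p
      + (2 * G1 y p * G2 y p / (G1 x p * G2 y p + G1 y p * G2 x p)) * DXY F x y p
      + (((G2 y p) ^ 2 * (Dq1 (G1 x) p - 2 * G1 F p * G1 x p)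
          - (G1 y p) ^ 2 * (Dq2 (G2 x) p - 2 * G2 F p * G2 x p)) /
          ((G1 x p) ^ 2 * (G2 y p) ^ 2 - (G1 y p) ^ 2 * (G2 x p) ^ 2)) * DX F x y p
      + (((G2 y p) ^ 2 * (Dq1 (G1 y) p - 2 * G1 F p * G1 y p)
          - (G1 y p) ^ 2 * (Dq2 (G2 y) p - 2 * G2 F p * G2 y p)) /
          ((G1 x p) ^ 2 * (G2 y p) ^ 2 - (G1 y p) ^ 2 * (G2 x p) ^ 2)) * DY F x y p
      + (-(((G2 y p) ^ 2 * (Dq1 (G1 F) p - (G1 F p) ^ 2)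
          - (G1 y p) ^ 2 * (Dq2 (G2 F) p - (G2 F p) ^ 2)) /
          ((G1 x p) ^ 2 * (G2 y p) ^ 2 - (G1 y p) ^ 2 * (G2 x p) ^ 2))) * F p = 0 := by
  intro p hp
  have hΔ : Del x y p ≠ 0 := fun h => hden p hp (by
    rw [show (G1 x p) ^ 2 * (G2 y p) ^ 2 - (G1 y p) ^ 2 * (G2 x p) ^ 2
      = Del x y p * (G1 x p * G2 y p + G1 y p * G2 x p) by rw [Del]; ring, h, zero_mul])
  have hF1 := ((hF p hp).g1 (hFne p hp)).differentiableAt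
  have hF2 := ((hF p hp).g2 (hFne p hp)).differentiableAt
  have hx1 := ((hx p hp).g1 (hxne p hp)).differentiableAt
  have hx2 := ((hx p hp).g2 (hxne p hp)).differentiableAt
  have hy1 := ((hy p hp).g1 (hyne p hp)).differentiableAt
  have hy2 := ((hy p hp).g2 (hyne p hp)).differentiableAt
  have hN : DifferentiableAt ℂ (DelX F y) p := (hF1.mul hy2).sub (hF2.mul hy1)
  have hD : DifferentiableAt ℂ (Del x y) p := (hx1.mul hy2).sub (hx2.mul hy1)
  simp only [DXX, DXY, DX, DY]
  rw [rx_eq, dq1_div hN hD hΔ, dq2_div hN hD hΔ, delX_eq, del_eq,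
    dq1_mul_sub_mul hF1 hy2 hF2 hy1, dq1_mul_sub_mul hx1 hy2 hx2 hy1,
    dq2_mul_sub_mul hF1 hy2 hF2 hy1, dq2_mul_sub_mul hx1 hy2 hx2 hy1,
    ← dq1_g2_eq_dq2_g1 (hF p hp) (hFne p hp), ← dq1_g2_eq_dq2_g1 (hx p hp) (hxne p hp),
    ← dq1_g2_eq_dq2_g1 (hy p hp) (hyne p hp)]
  exact pde_combination_eq_zero _ _ _ _ _ _ _ _ _ _ _ _ _ _ _ _ (hden p hp)

theorem stmt0
    (U : Set (ℂ × ℂ)) (hUopen : IsOpen U)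
    (hU : ∀ p ∈ U, p.1 ≠ 0 ∧ p.2 ≠ 0)
    (F x y : ℂ × ℂ → ℂ)
    (hF : AnalyticOnNhd ℂ F U) (hx : AnalyticOnNhd ℂ x U) (hy : AnalyticOnNhd ℂ y U)
    (hFne : ∀ p ∈ U, F p ≠ 0) (hxne : ∀ p ∈ U, x p ≠ 0) (hyne : ∀ p ∈ U, y p ≠ 0)
    (hΔ : ∀ p ∈ U, Del x y p ≠ 0)
    (hden : ∀ p ∈ U, (G1 x p) ^ 2 * (G2 y p) ^ 2 - (G1 y p) ^ 2 * (G2 x p) ^ 2 ≠ 0) :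
    ∀ p ∈ U,
      DXX F x y p
      + (2 * G1 y p * G2 y p / (G1 x p * G2 y p + G1 y p * G2 x p)) * DXY F x y p
      + (((G2 y p) ^ 2 * (Dq1 (G1 x) p - 2 * G1 F p * G1 x p)
          - (G1 y p) ^ 2 * (Dq2 (G2 x) p - 2 * G2 F p * G2 x p)) /
          ((G1 x p) ^ 2 * (G2 y p) ^ 2 - (G1 y p) ^ 2 * (G2 x p) ^ 2)) * DX F x y p
      + (((G2 y p) ^ 2 * (Dq1 (G1 y) p - 2 * G1 F p * G1 y p)
          - (G1 y p) ^ 2 * (Dq2 (G2 y) p - 2 * G2 F p * G2 y p)) /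
          ((G1 x p) ^ 2 * (G2 y p) ^ 2 - (G1 y p) ^ 2 * (G2 x p) ^ 2)) * DY F x y p
      + (-(((G2 y p) ^ 2 * (Dq1 (G1 F) p - (G1 F p) ^ 2)
          - (G1 y p) ^ 2 * (Dq2 (G2 F) p - (G2 F p) ^ 2)) /
          ((G1 x p) ^ 2 * (G2 y p) ^ 2 - (G1 y p) ^ 2 * (G2 x p) ^ 2))) * F p = 0 :=
  stmt0_general U F x y hF hx hy hFne hxne hyne hden
end

section
/- Let Ω ⊆ ℂ be open and connected, let p₁, p₂ be holomorphic on Ω, and let f, f₁ be holomorphic solutions on Ω of h'' + p₁h' + p₂h = 0 with f nonvanishing. Set τ = f₁/f and suppose τ'(t₀) ≠ 0 at t₀ ∈ Ω, so that τ has a holomorphic local inverse φ near τ₀ = τ(t₀) with φ(τ₀) = t₀. Then 2·Q(t₀)·φ'(τ₀)² + {φ, τ}(τ₀) = 0, where Q = (4p₂ − 2p₁' − p₁²)/4 and {φ, τ} = φ'''/φ' − (3/2)(φ''/φ')² is the Schwarzian derivative of φ evaluated at τ₀. -/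
/-
By Abel's identity the Wronskian `W` of `f` and `f₁` satisfies `W' = -p₁ W`, so `τ' = W / f²` and
`τ'' / τ' = -(p₁ + 2 f' / f)`. For any `τ` the Schwarzian is `(τ''/τ')' - (τ''/τ')² / 2`, and
eliminating `f''` with the equation gives `{τ, t} = 2 Q`. Differentiating `τ ∘ φ = id` three times
gives the inversion rule `{φ, w} = -φ'(w)² {τ, t}`, whence the claim.
-/

open Filter Topology

section General

variable {𝕜 : Type*} [NontriviallyNormedField 𝕜]

noncomputable def schwarzian (φ : 𝕜 → 𝕜) (z : 𝕜) : 𝕜 :=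
  deriv (deriv (deriv φ)) z / deriv φ z - 3 / 2 * (deriv (deriv φ) z / deriv φ z) ^ 2

noncomputable def wronskian (f g : 𝕜 → 𝕜) (t : 𝕜) : 𝕜 := f t * deriv g t - deriv f t * g t

theorem Filter.EventuallyEq.eventuallyEq_of_hasDerivAt {E : Type*} [NormedAddCommGroup E]
    [NormedSpace 𝕜 E] {F G : 𝕜 → E} {F' G' : 𝕜 → E} {x : 𝕜} (h : F =ᶠ[𝓝 x] G)
    (hF : ∀ᶠ y in 𝓝 x, HasDerivAt F (F' y) y) (hG : ∀ᶠ y in 𝓝 x, HasDerivAt G (G' y) y) :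
    F' =ᶠ[𝓝 x] G' := by
  filter_upwards [h.eventuallyEq_nhds, hF, hG] with y hy hFy hGy
  exact hFy.unique (hGy.congr_of_eventuallyEq hy)

theorem hasDerivAt_div_eq_wronskian {f g : 𝕜 → 𝕜} {t : 𝕜} (hf : DifferentiableAt 𝕜 f t)
    (hg : DifferentiableAt 𝕜 g t) (hft : f t ≠ 0) : HasDerivAt (fun s => g s / f s) (wronskian f g t / f t ^ 2) t :=
  (hg.hasDerivAt.fun_div hf.hasDerivAt hft).congr_deriv (by unfold wronskian; ring)

end General

section InverseFunction

variable {𝕜 : Type*} [RCLike 𝕜] {τ φ : 𝕜 → 𝕜} {w₀ : 𝕜}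

theorem eventually_deriv_comp_mul_deriv_eq_one (hτ : AnalyticAt 𝕜 τ (φ w₀))
    (hφ : AnalyticAt 𝕜 φ w₀) (hinv : ∀ᶠ w in 𝓝 w₀, τ (φ w) = w) :
    (fun w => deriv τ (φ w) * deriv φ w) =ᶠ[𝓝 w₀] fun _ => 1 := by
  have hτφ := hφ.continuousAt.eventually hτ.eventually_analyticAt
  refine EventuallyEq.eventuallyEq_of_hasDerivAt (F := fun w => τ (φ w)) hinv ?_
    (Eventually.of_forall hasDerivAt_id')
  filter_upwards [hτφ, hφ.eventually_analyticAt] with w hτw hφw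
  exact hτw.differentiableAt.hasDerivAt.comp w hφw.differentiableAt.hasDerivAt

theorem eventually_deriv_deriv_comp_eq_zero (hτ : AnalyticAt 𝕜 τ (φ w₀))
    (hφ : AnalyticAt 𝕜 φ w₀) (hinv : ∀ᶠ w in 𝓝 w₀, τ (φ w) = w) :
    (fun w => deriv (deriv τ) (φ w) * deriv φ w ^ 2 + deriv τ (φ w) * deriv (deriv φ) w)
      =ᶠ[𝓝 w₀] fun _ => 0 := by
  have hτφ := hφ.continuousAt.eventually hτ.eventually_analyticAt
  have hd : ∀ᶠ w in 𝓝 w₀, HasDerivAt (fun w => deriv τ (φ w) * deriv φ w)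
      (deriv (deriv τ) (φ w) * deriv φ w * deriv φ w + deriv τ (φ w) * deriv (deriv φ) w) w := by
    filter_upwards [hτφ, hφ.eventually_analyticAt] with w hτw hφw
    exact (hτw.deriv.differentiableAt.hasDerivAt.comp w hφw.differentiableAt.hasDerivAt).fun_mul
      hφw.deriv.differentiableAt.hasDerivAt
  filter_upwards [(eventually_deriv_comp_mul_deriv_eq_one hτ hφ hinv).eventuallyEq_of_hasDerivAt hd
    (Eventually.of_forall fun w => hasDerivAt_const w 1)] with w hw
  linear_combination hw

theorem deriv_deriv_deriv_comp_eq_zero (hτ : AnalyticAt 𝕜 τ (φ w₀))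
    (hφ : AnalyticAt 𝕜 φ w₀) (hinv : ∀ᶠ w in 𝓝 w₀, τ (φ w) = w) :
    deriv (deriv (deriv τ)) (φ w₀) * deriv φ w₀ ^ 3
      + 3 * deriv (deriv τ) (φ w₀) * deriv φ w₀ * deriv (deriv φ) w₀
      + deriv τ (φ w₀) * deriv (deriv (deriv φ)) w₀ = 0 := by
  have hτφ := hφ.continuousAt.eventually hτ.eventually_analyticAt
  have hd : ∀ᶠ w in 𝓝 w₀, HasDerivAt
      (fun w => deriv (deriv τ) (φ w) * deriv φ w ^ 2 + deriv τ (φ w) * deriv (deriv φ) w)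
      (deriv (deriv (deriv τ)) (φ w) * deriv φ w * deriv φ w ^ 2
        + deriv (deriv τ) (φ w) * (2 * deriv φ w * deriv (deriv φ) w)
        + (deriv (deriv τ) (φ w) * deriv φ w * deriv (deriv φ) w
          + deriv τ (φ w) * deriv (deriv (deriv φ)) w)) w := by
    filter_upwards [hτφ, hφ.eventually_analyticAt] with w hτw hφw
    have hφ' := hφw.differentiableAt.hasDerivAt
    have hφ'' := hφw.deriv.differentiableAt.hasDerivAt
    refine (((hτw.deriv.deriv.differentiableAt.hasDerivAt.comp w hφ').fun_mul
      (hφ''.fun_pow 2)).fun_add ((hτw.deriv.differentiableAt.hasDerivAt.comp w hφ').fun_mul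
        hφw.deriv.deriv.differentiableAt.hasDerivAt)).congr_deriv ?_
    simp only [Function.comp_apply]
    ring
  have h := (eventually_deriv_deriv_comp_eq_zero hτ hφ hinv).eventuallyEq_of_hasDerivAt hd
    (Eventually.of_forall fun w => hasDerivAt_const w 0)
  linear_combination h.self_of_nhds

theorem schwarzian_of_eventually_leftInverse (hτ : AnalyticAt 𝕜 τ (φ w₀))
    (hφ : AnalyticAt 𝕜 φ w₀) (hinv : ∀ᶠ w in 𝓝 w₀, τ (φ w) = w) :
    schwarzian φ w₀ = -deriv φ w₀ ^ 2 * schwarzian τ (φ w₀) := by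
  have h₁ := (eventually_deriv_comp_mul_deriv_eq_one hτ hφ hinv).self_of_nhds
  have h₂ := (eventually_deriv_deriv_comp_eq_zero hτ hφ hinv).self_of_nhds
  have h₃ := deriv_deriv_deriv_comp_eq_zero hτ hφ hinv
  unfold schwarzian
  set a := deriv φ w₀
  set b := deriv (deriv φ) w₀
  set c := deriv (deriv (deriv φ)) w₀
  set B := deriv (deriv τ) (φ w₀)
  have ha : a ≠ 0 := right_ne_zero_of_mul_eq_one h₁
  have hb : b = -(B * a ^ 3) := by linear_combination a * h₂ - b * h₁
  have hc : c = 3 * B ^ 2 * a ^ 5 - deriv (deriv (deriv τ)) (φ w₀) * a ^ 4 := by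
    linear_combination a * h₃ - c * h₁ - 3 * B * a ^ 2 * hb
  rw [hb, hc, eq_inv_of_mul_eq_one_left h₁]
  field_simp
  ring

end InverseFunction

section RatioOfSolutions

variable {𝕜 : Type*} [RCLike 𝕜] {p₁ p₂ f g : 𝕜 → 𝕜} {Ω : Set 𝕜} {t : 𝕜}

theorem hasDerivAt_wronskian (hf : AnalyticAt 𝕜 f t) (hg : AnalyticAt 𝕜 g t)
    (hf'' : deriv (deriv f) t + p₁ t * deriv f t + p₂ t * f t = 0)
    (hg'' : deriv (deriv g) t + p₁ t * deriv g t + p₂ t * g t = 0) :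
    HasDerivAt (wronskian f g) (-p₁ t * wronskian f g t) t := by
  refine ((hf.differentiableAt.hasDerivAt.fun_mul hg.deriv.differentiableAt.hasDerivAt).fun_sub
    (hf.deriv.differentiableAt.hasDerivAt.fun_mul hg.differentiableAt.hasDerivAt)).congr_deriv ?_
  unfold wronskian
  linear_combination f t * hg'' - g t * hf''

theorem deriv_deriv_div_of_ode (hΩ : IsOpen Ω) (hf : AnalyticOnNhd 𝕜 f Ω)
    (hg : AnalyticOnNhd 𝕜 g Ω)
    (hode_f : ∀ t ∈ Ω, deriv (deriv f) t + p₁ t * deriv f t + p₂ t * f t = 0)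
    (hode_g : ∀ t ∈ Ω, deriv (deriv g) t + p₁ t * deriv g t + p₂ t * g t = 0)
    (hfne : ∀ t ∈ Ω, f t ≠ 0) (ht : t ∈ Ω) :
    deriv (deriv fun s => g s / f s) t
      = deriv (fun s => g s / f s) t * -(p₁ t + 2 * (deriv f t / f t)) := by
  have hderiv : deriv (fun s => g s / f s) =ᶠ[𝓝 t] fun s => wronskian f g s / f s ^ 2 := by
    filter_upwards [hΩ.mem_nhds ht] with s hs
    exact (hasDerivAt_div_eq_wronskian (hf s hs).differentiableAt (hg s hs).differentiableAt
      (hfne s hs)).deriv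
  rw [hderiv.deriv_eq, hderiv.eq_of_nhds]
  have hft := hfne t ht
  refine (((hasDerivAt_wronskian (hf t ht) (hg t ht) (hode_f t ht) (hode_g t ht)).fun_div
    ((hf t ht).differentiableAt.hasDerivAt.fun_pow 2) (pow_ne_zero 2 hft)).deriv).trans ?_
  field_simp
  ring

theorem schwarzian_eq_of_deriv_deriv_eq_mul {τ u : 𝕜 → 𝕜} (hτ' : deriv τ t ≠ 0)
    (hτ : DifferentiableAt 𝕜 (deriv τ) t) (hu : DifferentiableAt 𝕜 u t)
    (h : deriv (deriv τ) =ᶠ[𝓝 t] fun s => deriv τ s * u s) :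
    schwarzian τ t = deriv u t - u t ^ 2 / 2 := by
  have h₃ : deriv (deriv (deriv τ)) t = deriv τ t * (u t ^ 2 + deriv u t) := by
    rw [h.deriv_eq, deriv_fun_mul hτ hu, h.eq_of_nhds]
    ring
  unfold schwarzian
  rw [h₃, h.eq_of_nhds]
  field_simp
  ring

theorem schwarzian_div_of_ode (hΩ : IsOpen Ω) (hp₁ : DifferentiableAt 𝕜 p₁ t)
    (hf : AnalyticOnNhd 𝕜 f Ω) (hg : AnalyticOnNhd 𝕜 g Ω)
    (hode_f : ∀ t ∈ Ω, deriv (deriv f) t + p₁ t * deriv f t + p₂ t * f t = 0)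
    (hode_g : ∀ t ∈ Ω, deriv (deriv g) t + p₁ t * deriv g t + p₂ t * g t = 0)
    (hfne : ∀ t ∈ Ω, f t ≠ 0) (ht : t ∈ Ω) (hτ' : deriv (fun s => g s / f s) t ≠ 0) :
    schwarzian (fun s => g s / f s) t = 2 * ((4 * p₂ t - 2 * deriv p₁ t - p₁ t ^ 2) / 4) := by
  have hft := hfne t ht
  have hu : HasDerivAt (fun s => -(p₁ s + 2 * (deriv f s / f s)))
      (-(deriv p₁ t + 2 * ((deriv (deriv f) t * f t - deriv f t * deriv f t) / f t ^ 2))) t :=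
    (hp₁.hasDerivAt.fun_add (((hf t ht).deriv.differentiableAt.hasDerivAt.fun_div
      (hf t ht).differentiableAt.hasDerivAt hft).const_mul 2)).fun_neg
  have hτ := ((hg t ht).div (hf t ht) hft).deriv.differentiableAt
  have h : deriv (deriv fun s => g s / f s) =ᶠ[𝓝 t]
      fun s => deriv (fun s => g s / f s) s * -(p₁ s + 2 * (deriv f s / f s)) := by
    filter_upwards [hΩ.mem_nhds ht] with s hs
    exact deriv_deriv_div_of_ode hΩ hf hg hode_f hode_g hfne hs
  rw [schwarzian_eq_of_deriv_deriv_eq_mul hτ' hτ hu.differentiableAt h, hu.deriv]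
  field_simp
  linear_combination (-16 * f t) * hode_f t ht

end RatioOfSolutions

theorem stmt7_general (Ω : Set ℂ) (hΩopen : IsOpen Ω)
    (p₁ p₂ f f₁ : ℂ → ℂ)
    (hp₁ : AnalyticOnNhd ℂ p₁ Ω)
    (hf : AnalyticOnNhd ℂ f Ω) (hf₁ : AnalyticOnNhd ℂ f₁ Ω)
    (hode : ∀ t ∈ Ω, deriv (deriv f) t + p₁ t * deriv f t + p₂ t * f t = 0)
    (hode₁ : ∀ t ∈ Ω, deriv (deriv f₁) t + p₁ t * deriv f₁ t + p₂ t * f₁ t = 0)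
    (hfne : ∀ t ∈ Ω, f t ≠ 0)
    (t₀ : ℂ) (ht₀ : t₀ ∈ Ω)
    (hτ' : deriv (fun t => f₁ t / f t) t₀ ≠ 0)
    (φ : ℂ → ℂ)
    (hφ : AnalyticAt ℂ φ (f₁ t₀ / f t₀))
    (hφ0 : φ (f₁ t₀ / f t₀) = t₀)
    (hφinv : ∀ᶠ w in nhds (f₁ t₀ / f t₀), f₁ (φ w) / f (φ w) = w) :
    2 * ((4 * p₂ t₀ - 2 * deriv p₁ t₀ - (p₁ t₀) ^ 2) / 4) *
        (deriv φ (f₁ t₀ / f t₀)) ^ 2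
      + (deriv (deriv (deriv φ)) (f₁ t₀ / f t₀) / deriv φ (f₁ t₀ / f t₀)
          - (3 / 2) * (deriv (deriv φ) (f₁ t₀ / f t₀) / deriv φ (f₁ t₀ / f t₀)) ^ 2)
      = 0 := by
  have hτ : AnalyticAt ℂ (fun t => f₁ t / f t) (φ (f₁ t₀ / f t₀)) := by
    rw [hφ0]
    exact (hf₁ t₀ ht₀).div (hf t₀ ht₀) (hfne t₀ ht₀)
  have hS := schwarzian_of_eventually_leftInverse hτ hφ hφinv
  rw [hφ0, schwarzian_div_of_ode hΩopen (hp₁ t₀ ht₀).differentiableAt hf hf₁ hode hode₁ hfne ht₀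
    hτ'] at hS
  change _ + schwarzian φ _ = 0
  rw [hS]
  ring

theorem stmt7 (Ω : Set ℂ) (hΩopen : IsOpen Ω) (hΩconn : IsConnected Ω)
    (p₁ p₂ f f₁ : ℂ → ℂ)
    (hp₁ : AnalyticOnNhd ℂ p₁ Ω) (hp₂ : AnalyticOnNhd ℂ p₂ Ω)
    (hf : AnalyticOnNhd ℂ f Ω) (hf₁ : AnalyticOnNhd ℂ f₁ Ω)
    (hode : ∀ t ∈ Ω, deriv (deriv f) t + p₁ t * deriv f t + p₂ t * f t = 0)
    (hode₁ : ∀ t ∈ Ω, deriv (deriv f₁) t + p₁ t * deriv f₁ t + p₂ t * f₁ t = 0)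
    (hfne : ∀ t ∈ Ω, f t ≠ 0)
    (t₀ : ℂ) (ht₀ : t₀ ∈ Ω)
    (hτ' : deriv (fun t => f₁ t / f t) t₀ ≠ 0)
    (φ : ℂ → ℂ)
    (hφ : AnalyticAt ℂ φ (f₁ t₀ / f t₀))
    (hφ0 : φ (f₁ t₀ / f t₀) = t₀)
    (hφmem : ∀ᶠ w in nhds (f₁ t₀ / f t₀), φ w ∈ Ω)
    (hφinv : ∀ᶠ w in nhds (f₁ t₀ / f t₀), f₁ (φ w) / f (φ w) = w) :
    2 * ((4 * p₂ t₀ - 2 * deriv p₁ t₀ - (p₁ t₀) ^ 2) / 4) *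
        (deriv φ (f₁ t₀ / f t₀)) ^ 2
      + (deriv (deriv (deriv φ)) (f₁ t₀ / f t₀) / deriv φ (f₁ t₀ / f t₀)
          - (3 / 2) * (deriv (deriv φ) (f₁ t₀ / f t₀) / deriv φ (f₁ t₀ / f t₀)) ^ 2)
      = 0 :=
  stmt7_general Ω hΩopen p₁ p₂ f f₁ hp₁ hf hf₁ hode hode₁ hfne t₀ ht₀ hτ' φ hφ hφ0 hφinv
end
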